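/- arXiv:1609.08995 — 2 statements merged into one kernel-verified Lean document; each statement's English description precedes it below -/
import Mathlib

section
/- Let $(X,d,\mu)$ be a metric measure space with a dominating function $\lambda: X \times (0,\infty) \to (0,\infty)$ such that each $r \mapsto \lambda(x,r)$ is non-decreasing, $\mu(B(x,r)) \le \lambda(x,r)$, and $\lambda(x,r) \le C_\lambda \lambda(x,r/2)$ for all $x,r$. Then there exists a dominating function $\tilde\lambda$ with the same three properties (possibly with a larger constant) which additionally satisfies $\tilde\lambda(x,r) \le C \tilde\lambda(y,r)$ whenever $d(x,y) \le r$. (One may take $\tilde\lambda(x,r) = \inf_{z \in X} \lambda(z, r + d(x,z))$ or $\tilde\lambda(x,r)=\sup_{d(x,y)\le r}\lambda(y,r)$, suitably adjusted.) -/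
open MeasureTheory Metric ENNReal

/-!
Replace `λ(x, r)` by `λ̃(x, r) = inf_z λ(z, r + d(x, z)) + r`. Since `B(x, r) ⊆ B(z, r + d(x, z))`,
every term of the infimum still dominates `μ(B(x, r))`. Both the halving estimate and the
comparison of `λ̃(x, r)` with `λ̃(y, r)` for `d(x, y) ≤ r` reduce, term by term in `z`, to
`r + d(x, z) ≤ 2 (s + d(y, z))` and one application of the doubling of `λ(z, ·)`. The summand
`r` keeps `λ̃` positive, as the infimum may vanish.
-/

section InfOverCenters

variable {X : Type*} [PseudoMetricSpace X]

/-- The least value of `lam` over the balls `B(z, r + d(x, z))`, all of which contain `B(x, r)`. -/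
noncomputable def infOverCenters (lam : X → ℝ → ℝ≥0∞) (x : X) (r : ℝ) : ℝ≥0∞ :=
  ⨅ z, lam z (r + dist x z)

variable {lam : X → ℝ → ℝ≥0∞}

theorem infOverCenters_le_self (x : X) (r : ℝ) : infOverCenters lam x r ≤ lam x r :=
  (iInf_le _ x).trans_eq (by rw [dist_self, add_zero])

theorem infOverCenters_mono (hmono : ∀ x r s, 0 < r → r ≤ s → lam x r ≤ lam x s)
    (x : X) {r s : ℝ} (hr : 0 < r) (hrs : r ≤ s) :
    infOverCenters lam x r ≤ infOverCenters lam x s :=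
  iInf_mono fun z => hmono z _ _ (by positivity) (by linarith)

theorem measure_ball_le_infOverCenters [MeasurableSpace X] {μ : Measure X}
    (hdom : ∀ x r, 0 < r → μ (ball x r) ≤ lam x r) (x : X) {r : ℝ} (hr : 0 < r) :
    μ (ball x r) ≤ infOverCenters lam x r := by
  refine le_iInf fun z => (measure_mono fun w hw => ?_).trans (hdom z _ (by positivity))
  rw [mem_ball] at hw ⊢
  linarith [dist_triangle w x z]

theorem infOverCenters_le_mul {Cl : ℝ≥0∞} (hClfin : Cl ≠ ⊤)
    (hmono : ∀ x r s, 0 < r → r ≤ s → lam x r ≤ lam x s)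
    (hhalf : ∀ x r, 0 < r → lam x r ≤ Cl * lam x (r / 2))
    {x y : X} {r s : ℝ} (hr : 0 < r) (hs : 0 < s) (hrs : ∀ z, r + dist x z ≤ 2 * (s + dist y z)) :
    infOverCenters lam x r ≤ Cl * infOverCenters lam y s := by
  have : Nonempty X := ⟨y⟩
  rw [infOverCenters, infOverCenters, ENNReal.mul_iInf fun h => absurd h hClfin]
  refine le_iInf fun z => (iInf_le _ z).trans ?_
  calc lam z (r + dist x z) ≤ lam z (2 * (s + dist y z)) := hmono z _ _ (by positivity) (hrs z)
    _ ≤ Cl * lam z (s + dist y z) :=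
      (hhalf z _ (by positivity)).trans_eq (by rw [mul_div_cancel_left₀ _ two_ne_zero])

end InfOverCenters

/-- If `(X,d,μ)` is upper doubling with dominating function `lam` (non-decreasing in `r`,
dominating `μ` on balls, and satisfying the halving condition with constant `Cl`), then there
exists a dominating function `lam'` with the same three properties (possibly with a larger
constant `C`) which in addition is quasi-invariant: `lam' x r ≤ C * lam' y r` whenever
`dist x y ≤ r`. -/
theorem stmt0 {X : Type*} [MetricSpace X] [MeasurableSpace X] (μ : Measure X)
    (lam : X → ℝ → ℝ≥0∞) (Cl : ℝ≥0∞) (hCl : 1 ≤ Cl) (hClfin : Cl < ⊤)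
    (hpos : ∀ x r, 0 < r → 0 < lam x r ∧ lam x r < ⊤)
    (hmono : ∀ x r s, 0 < r → r ≤ s → lam x r ≤ lam x s)
    (hdom : ∀ x r, 0 < r → μ (ball x r) ≤ lam x r)
    (hhalf : ∀ x r, 0 < r → lam x r ≤ Cl * lam x (r / 2)) :
    ∃ (lam' : X → ℝ → ℝ≥0∞) (C : ℝ≥0∞), 1 ≤ C ∧ C < ⊤ ∧
      (∀ x r, 0 < r → 0 < lam' x r ∧ lam' x r < ⊤) ∧
      (∀ x r s, 0 < r → r ≤ s → lam' x r ≤ lam' x s) ∧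
      (∀ x r, 0 < r → μ (ball x r) ≤ lam' x r) ∧
      (∀ x r, 0 < r → lam' x r ≤ C * lam' x (r / 2)) ∧
      (∀ x y r, 0 < r → dist x y ≤ r → lam' x r ≤ C * lam' y r) := by
  have hCl_le : Cl ≤ 2 * Cl := le_mul_of_one_le_left' one_le_two
  have htwo_le : (2 : ℝ≥0∞) ≤ 2 * Cl := le_mul_of_one_le_right' hCl
  refine ⟨fun x r => infOverCenters lam x r + ENNReal.ofReal r, 2 * Cl, hCl.trans hCl_le,
    mul_lt_top ofNat_lt_top hClfin, fun x r hr => ⟨?_, ?_⟩, fun x r s hr hrs => ?_,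
    fun x r hr => ?_, fun x r hr => ?_, fun x y r hr hxy => ?_⟩
  · exact (ofReal_pos.2 hr).trans_le le_add_self
  · exact add_lt_top.2 ⟨(infOverCenters_le_self x r).trans_lt (hpos x r hr).2, ofReal_lt_top⟩
  · exact add_le_add (infOverCenters_mono hmono x hr hrs) (ofReal_le_ofReal hrs)
  · exact (measure_ball_le_infOverCenters hdom x hr).trans le_self_add
  · have hinf : infOverCenters lam x r ≤ Cl * infOverCenters lam x (r / 2) :=
      infOverCenters_le_mul hClfin.ne hmono hhalf hr (half_pos hr) fun z => by
        linarith [dist_nonneg (x := x) (y := z)]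
    have hlin : ENNReal.ofReal r = 2 * ENNReal.ofReal (r / 2) := by
      rw [← ofReal_ofNat 2, ← ofReal_mul zero_le_two]; ring_nf
    dsimp only
    rw [mul_add, hlin]
    exact add_le_add (hinf.trans (by gcongr)) (by gcongr)
  · have hinf : infOverCenters lam x r ≤ Cl * infOverCenters lam y r :=
      infOverCenters_le_mul hClfin.ne hmono hhalf hr hr fun z => by
        linarith [dist_triangle x y z, dist_nonneg (x := y) (y := z)]
    dsimp only
    rw [mul_add]
    exact add_le_add (hinf.trans (by gcongr)) (le_mul_of_one_le_left' (one_le_two.trans htwo_le))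
end

section
/- Let $(X,d,\mu)$ be upper doubling with dominating function $\lambda$. Define the bilinear maximal operator $\mathcal{M}_\lambda(f_1,f_2)(x) = \sup_{r>0} \lambda(x,r)^{-2} \left(\int_{B(x,r)} |f_1| \,d\mu\right)\left(\int_{B(x,r)} |f_2| \,d\mu\right)$. Then $\mathcal{M}_\lambda$ is bounded from $L^1(\mu) \times L^1(\mu)$ to $L^{1/2,\infty}(\mu)$: there is a constant $C$ such that for all $f_1,f_2 \in L^1(\mu)$ and all $t>0$, $\mu\{x : \mathcal{M}_\lambda(f_1,f_2)(x) > t\} \le C \left(t^{-1}\|f_1\|_{L^1(\mu)}\|f_2\|_{L^1(\mu)}\right)^{1/2}$. -/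
/-!
Vitali's covering lemma (disjoint balls whose fourfold enlargements cover, for bounded radii)
and three applications of `λ(x, r) ≤ C λ(x, r / 2)` give the weak (1,1) estimate
`μ {M_λ ν > s} ≤ C³ ν(X) / s` for the maximal function of a finite measure `ν`.
The bilinear operator is dominated pointwise by `M_λ f₁ · M_λ f₂`; splitting the level as
`t = (A / c) (B / c)`, with `A`, `B` the `L¹` norms and `c = (A B / t)^{1/2}`, turns the two
weak (1,1) bounds into the weak `L^{1/2}` bound with constant `2 C³`.
-/

open MeasureTheory Metric ENNReal Set

theorem Set.PairwiseDisjoint.countable_of_measure_pos {ι α : Type*} [MeasurableSpace α]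
    {ν : Measure α} [SFinite ν] {u : Set ι} {s : ι → Set α}
    (hs : ∀ i ∈ u, MeasurableSet (s i)) (hd : u.PairwiseDisjoint s)
    (hpos : ∀ i ∈ u, 0 < ν (s i)) : u.Countable := by
  have hcount := Measure.countable_meas_pos_of_disjoint_iUnion (μ := ν)
    (As := fun i : u => s i) (fun i => hs i i.2)
    (fun i j hij => hd i.2 j.2 (Subtype.coe_injective.ne hij))
  have huniv : {i : u | 0 < ν (s i)} = univ := eq_univ_of_forall fun i => hpos i i.2
  rw [huniv, countable_univ_iff] at hcount
  exact Set.countable_coe_iff.mp hcount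

theorem measure_lt_mul_eq_zero_of_measure_pos_eq_zero {α : Type*} [MeasurableSpace α]
    {μ : Measure α} {F G : α → ℝ≥0∞} (hF : μ {x | 0 < F x} = 0) (t : ℝ≥0∞) :
    μ {x | t < F x * G x} = 0 :=
  measure_mono_null (fun x (hx : t < F x * G x) =>
    show 0 < F x from pos_iff_ne_zero.2 fun h => by simp [h] at hx) hF

theorem measure_lt_mul_le_of_forall_measure_lt_le {α : Type*} [MeasurableSpace α]
    {μ : Measure α} {F G : α → ℝ≥0∞} {K a b : ℝ≥0∞}
    (hF : ∀ u, μ {x | u < F x} ≤ K * (u⁻¹ * a))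
    (hG : ∀ v, μ {x | v < G x} ≤ K * (v⁻¹ * b))
    (ha : a ≠ ⊤) (hb : b ≠ ⊤) {t : ℝ≥0∞} (ht : t ≠ 0) :
    μ {x | t < F x * G x} ≤ 2 * K * (t⁻¹ * (a * b)) ^ (1 / 2 : ℝ) := by
  rcases eq_or_ne a 0 with rfl | ha0
  · -- `hF 0` reads `μ {x | 0 < F x} ≤ K * (∞ * 0) = 0`
    have hnull : μ {x | 0 < F x} = 0 := le_zero_iff.1 ((hF 0).trans_eq (by simp))
    exact (measure_lt_mul_eq_zero_of_measure_pos_eq_zero hnull t).trans_le zero_le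
  rcases eq_or_ne b 0 with rfl | hb0
  · have hnull : μ {x | 0 < G x} = 0 := le_zero_iff.1 ((hG 0).trans_eq (by simp))
    simp_rw [mul_comm (F _)]
    exact (measure_lt_mul_eq_zero_of_measure_pos_eq_zero hnull t).trans_le zero_le
  rcases eq_or_ne t ⊤ with rfl | htop
  · simp
  set c := (t⁻¹ * (a * b)) ^ (1 / 2 : ℝ)
  have hab0 : a * b ≠ 0 := mul_ne_zero ha0 hb0
  have habtop : a * b ≠ ⊤ := mul_ne_top ha hb
  have hbase0 : t⁻¹ * (a * b) ≠ 0 := mul_ne_zero (ENNReal.inv_ne_zero.2 htop) hab0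
  have hbasetop : t⁻¹ * (a * b) ≠ ⊤ := mul_ne_top (ENNReal.inv_ne_top.2 ht) habtop
  have hc0 : c ≠ 0 := (ENNReal.rpow_pos (pos_iff_ne_zero.2 hbase0) hbasetop).ne'
  have hctop : c ≠ ⊤ := ENNReal.rpow_ne_top_of_nonneg (by norm_num) hbasetop
  have hcc : c * c = t⁻¹ * (a * b) := by
    rw [← ENNReal.rpow_add _ _ hbase0 hbasetop]
    norm_num
  have hdiv_inv_mul : ∀ d, d ≠ 0 → d ≠ ⊤ → (d / c)⁻¹ * d = c := fun d hd0 hdtop => by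
    rw [ENNReal.inv_div (Or.inl hctop) (Or.inl hc0), ENNReal.div_mul_cancel hd0 hdtop]
  have huv : a / c * (b / c) = t := by
    rw [div_eq_mul_inv, div_eq_mul_inv, mul_mul_mul_comm, ← ENNReal.mul_inv (Or.inl hc0)
      (Or.inl hctop), hcc, ENNReal.mul_inv (Or.inr habtop) (Or.inr hab0),
      inv_inv, mul_left_comm, ENNReal.mul_inv_cancel hab0 habtop, mul_one]
  have hsplit : {x | t < F x * G x} ⊆ {x | a / c < F x} ∪ {x | b / c < G x} := by
    intro x hx
    by_contra! h
    simp only [mem_union, mem_ofPred_eq, not_or, not_lt] at h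
    exact (show t < F x * G x from hx).not_ge (huv ▸ mul_le_mul' h.1 h.2)
  calc μ {x | t < F x * G x} ≤ μ {x | a / c < F x} + μ {x | b / c < G x} :=
        (measure_mono hsplit).trans (measure_union_le _ _)
    _ ≤ K * ((a / c)⁻¹ * a) + K * ((b / c)⁻¹ * b) := add_le_add (hF _) (hG _)
    _ = 2 * K * c := by rw [hdiv_inv_mul a ha0 ha, hdiv_inv_mul b hb0 hb]; ring

section UpperDoubling

variable {X : Type*} {lam : X → ℝ → ℝ≥0∞} {Cl : ℝ≥0∞}

theorem le_pow_mul_of_le_mul_half (hhalf : ∀ x r, 0 < r → lam x r ≤ Cl * lam x (r / 2))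
    (x : X) {r : ℝ} (hr : 0 < r) : ∀ k : ℕ, lam x (2 ^ k * r) ≤ Cl ^ k * lam x r
  | 0 => by simp
  | k + 1 =>
    calc lam x (2 ^ (k + 1) * r) ≤ Cl * lam x (2 ^ (k + 1) * r / 2) :=
          hhalf x _ (by positivity)
      _ = Cl * lam x (2 ^ k * r) := by
          rw [pow_succ, mul_right_comm, mul_div_cancel_right₀ _ two_ne_zero]
      _ ≤ Cl * (Cl ^ k * lam x r) := by gcongr; exact le_pow_mul_of_le_mul_half hhalf x hr k
      _ = Cl ^ (k + 1) * lam x r := by ring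

variable [MetricSpace X] [MeasurableSpace X] {μ ν : Measure X}

noncomputable def maximalFunction (lam : X → ℝ → ℝ≥0∞) (ν : Measure X) (x : X) : ℝ≥0∞ :=
  ⨆ (r : ℝ) (_ : 0 < r), (lam x r)⁻¹ * ν (ball x r)

theorem le_maximalFunction (x : X) {r : ℝ} (hr : 0 < r) :
    (lam x r)⁻¹ * ν (ball x r) ≤ maximalFunction lam ν x :=
  le_iSup₂ (f := fun r (_ : 0 < r) => (lam x r)⁻¹ * ν (ball x r)) r hr

variable [OpensMeasurableSpace X]

theorem measure_setOf_lt_measure_ball_le_of_bounded [IsFiniteMeasure ν]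
    (hdom : ∀ x r, 0 < r → μ (ball x r) ≤ lam x r)
    (hhalf : ∀ x r, 0 < r → lam x r ≤ Cl * lam x (r / 2)) (s : ℝ≥0∞) (R : ℝ) :
    μ {x | ∃ r, 0 < r ∧ r ≤ R ∧ s * lam x r < ν (ball x r)} ≤ Cl ^ 3 * (s⁻¹ * ν univ) := by
  set E := {x | ∃ r, 0 < r ∧ r ≤ R ∧ s * lam x r < ν (ball x r)}
  choose! rad hrad0 hradR hrad using fun x (hx : x ∈ E) => hx
  obtain ⟨u, huE, hdisj, hcover⟩ :=
    Vitali.exists_disjoint_subfamily_covering_enlargement_closedBall E id rad R hradR 4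
      (by norm_num)
  simp only [id] at hdisj hcover
  have hu : u.Countable :=
    hdisj.mono (fun b => ball_subset_closedBall) |>.countable_of_measure_pos (ν := ν)
      (fun _ _ => measurableSet_ball) fun b hb => zero_le.trans_lt (hrad b (huE hb))
  have hball : ∀ b ∈ u,
      μ (closedBall b (4 * rad b)) ≤ Cl ^ 3 * (s⁻¹ * ν (ball b (rad b))) := by
    intro b hb
    have hr := hrad0 b (huE hb)
    have hlt := hrad b (huE hb)
    calc μ (closedBall b (4 * rad b)) ≤ μ (ball b (2 ^ 3 * rad b)) :=
          measure_mono (closedBall_subset_ball (by linarith))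
      _ ≤ lam b (2 ^ 3 * rad b) := hdom b _ (by positivity)
      _ ≤ Cl ^ 3 * lam b (rad b) := le_pow_mul_of_le_mul_half hhalf b hr 3
      _ ≤ Cl ^ 3 * (s⁻¹ * ν (ball b (rad b))) := by
          gcongr
          rw [mul_comm, ← div_eq_mul_inv, ENNReal.le_div_iff_mul_le (Or.inr hlt.ne_bot)
            (Or.inr (measure_ne_top ν _)), mul_comm]
          exact hlt.le
  calc μ E ≤ μ (⋃ b ∈ u, closedBall b (4 * rad b)) := measure_mono fun a ha => by
        obtain ⟨b, hb, hab⟩ := hcover a ha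
        exact mem_biUnion hb (hab (mem_closedBall_self (hrad0 a ha).le))
    _ ≤ ∑' b : u, μ (closedBall (b : X) (4 * rad b)) := measure_biUnion_le μ hu _
    _ ≤ ∑' b : u, Cl ^ 3 * (s⁻¹ * ν (ball (b : X) (rad b))) :=
        ENNReal.tsum_le_tsum fun b => hball b b.2
    _ = Cl ^ 3 * (s⁻¹ * ν (⋃ b ∈ u, ball b (rad b))) := by
        rw [measure_biUnion hu (hdisj.mono fun b => ball_subset_closedBall)
          fun _ _ => measurableSet_ball, ENNReal.tsum_mul_left, ENNReal.tsum_mul_left]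
    _ ≤ Cl ^ 3 * (s⁻¹ * ν univ) := by gcongr; exact subset_univ _

theorem measure_setOf_lt_measure_ball_le [IsFiniteMeasure ν]
    (hdom : ∀ x r, 0 < r → μ (ball x r) ≤ lam x r)
    (hhalf : ∀ x r, 0 < r → lam x r ≤ Cl * lam x (r / 2)) (s : ℝ≥0∞) :
    μ {x | ∃ r, 0 < r ∧ s * lam x r < ν (ball x r)} ≤ Cl ^ 3 * (s⁻¹ * ν univ) := by
  have hunion : {x | ∃ r, 0 < r ∧ s * lam x r < ν (ball x r)} =
      ⋃ R : ℝ, {x | ∃ r, 0 < r ∧ r ≤ R ∧ s * lam x r < ν (ball x r)} := by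
    ext x
    simp only [mem_ofPred_eq, mem_iUnion]
    exact ⟨fun ⟨r, hr, hlt⟩ => ⟨r, r, hr, le_rfl, hlt⟩, fun ⟨_, r, hr, _, hlt⟩ => ⟨r, hr, hlt⟩⟩
  have hmono : Monotone fun R : ℝ => {x | ∃ r, 0 < r ∧ r ≤ R ∧ s * lam x r < ν (ball x r)} :=
    fun _ _ hRR' _ ⟨r, hr, hrR, hlt⟩ => ⟨r, hr, hrR.trans hRR', hlt⟩
  rw [hunion, hmono.measure_iUnion]
  exact iSup_le fun R => measure_setOf_lt_measure_ball_le_of_bounded hdom hhalf s R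

theorem measure_lt_maximalFunction_le [IsFiniteMeasure ν]
    (hpos : ∀ x r, 0 < r → 0 < lam x r ∧ lam x r < ⊤)
    (hdom : ∀ x r, 0 < r → μ (ball x r) ≤ lam x r)
    (hhalf : ∀ x r, 0 < r → lam x r ≤ Cl * lam x (r / 2)) (s : ℝ≥0∞) :
    μ {x | s < maximalFunction lam ν x} ≤ Cl ^ 3 * (s⁻¹ * ν univ) := by
  refine (measure_mono fun x hx => ?_).trans (measure_setOf_lt_measure_ball_le hdom hhalf s)
  simp only [mem_ofPred_eq, maximalFunction, lt_iSup_iff] at hx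
  obtain ⟨r, hr, hlt⟩ := hx
  refine ⟨r, hr, ?_⟩
  rwa [mul_comm, ← div_eq_mul_inv, ENNReal.lt_div_iff_mul_lt (Or.inl (hpos x r hr).1.ne')
    (Or.inl (hpos x r hr).2.ne)] at hlt

theorem iSup_inv_mul_inv_mul_lintegral_mul_le (f₁ f₂ : X → ℝ≥0∞) (x : X) :
    ⨆ (r : ℝ) (_ : 0 < r), (lam x r)⁻¹ * (lam x r)⁻¹ *
        ((∫⁻ y in ball x r, f₁ y ∂μ) * ∫⁻ y in ball x r, f₂ y ∂μ) ≤
      maximalFunction lam (μ.withDensity f₁) x * maximalFunction lam (μ.withDensity f₂) x := by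
  refine iSup₂_le fun r hr => ?_
  rw [← withDensity_apply _ measurableSet_ball, ← withDensity_apply _ measurableSet_ball,
    mul_mul_mul_comm]
  exact mul_le_mul' (le_maximalFunction x hr) (le_maximalFunction x hr)

end UpperDoubling

theorem stmt1_general {X : Type*} [MetricSpace X] [MeasurableSpace X] [BorelSpace X]
    (μ : Measure X)
    (lam : X → ℝ → ℝ≥0∞) (Cl : ℝ≥0∞) (hClfin : Cl < ⊤)
    (hpos : ∀ x r, 0 < r → 0 < lam x r ∧ lam x r < ⊤)
    (hdom : ∀ x r, 0 < r → μ (ball x r) ≤ lam x r)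
    (hhalf : ∀ x r, 0 < r → lam x r ≤ Cl * lam x (r / 2)) :
    ∃ C : ℝ≥0∞, C < ⊤ ∧ ∀ (f₁ f₂ : X → ℝ), Integrable f₁ μ → Integrable f₂ μ →
      ∀ t : ℝ≥0∞, 0 < t →
        μ {x | t < ⨆ (r : ℝ) (_ : 0 < r),
            (lam x r)⁻¹ * (lam x r)⁻¹ * ((∫⁻ y in ball x r, ‖f₁ y‖₊ ∂μ) *
              ∫⁻ y in ball x r, ‖f₂ y‖₊ ∂μ)}
          ≤ C * (t⁻¹ * ((∫⁻ y, ‖f₁ y‖₊ ∂μ) * ∫⁻ y, ‖f₂ y‖₊ ∂μ)) ^ (1/2 : ℝ) := by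
  refine ⟨2 * Cl ^ 3, mul_lt_top ofNat_lt_top (pow_lt_top hClfin),
    fun f₁ f₂ hf₁ hf₂ t ht => ?_⟩
  set ν₁ := μ.withDensity fun y => (‖f₁ y‖₊ : ℝ≥0∞)
  set ν₂ := μ.withDensity fun y => (‖f₂ y‖₊ : ℝ≥0∞)
  have : IsFiniteMeasure ν₁ := isFiniteMeasure_withDensity hf₁.2.ne
  have : IsFiniteMeasure ν₂ := isFiniteMeasure_withDensity hf₂.2.ne
  calc _ ≤ μ {x | t < maximalFunction lam ν₁ x * maximalFunction lam ν₂ x} :=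
        measure_mono fun x hx => lt_of_lt_of_le hx (iSup_inv_mul_inv_mul_lintegral_mul_le _ _ x)
    _ ≤ 2 * Cl ^ 3 * (t⁻¹ * (ν₁ univ * ν₂ univ)) ^ (1 / 2 : ℝ) :=
        measure_lt_mul_le_of_forall_measure_lt_le (measure_lt_maximalFunction_le hpos hdom hhalf)
          (measure_lt_maximalFunction_le hpos hdom hhalf) (measure_ne_top _ _)
          (measure_ne_top _ _) ht.ne'
    _ = _ := by
        rw [withDensity_apply _ MeasurableSet.univ, withDensity_apply _ MeasurableSet.univ,
          Measure.restrict_univ]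

/-- On a geometrically doubling metric space with an upper doubling measure `μ` (dominating
function `lam`, halving/quasi-invariance constant `Cl`), the bilinear maximal operator
`𝓜_λ(f₁,f₂)(x) = sup_{r>0} λ(x,r)⁻² ∫_{B(x,r)}|f₁| ∫_{B(x,r)}|f₂|` is bounded from
`L¹(μ) × L¹(μ)` to `L^{1/2,∞}(μ)`: there is `C` with
`μ{x : 𝓜_λ(f₁,f₂)(x) > t} ≤ C (t⁻¹ ‖f₁‖₁ ‖f₂‖₁)^{1/2}` for all `t > 0`. -/
theorem stmt1 {X : Type*} [MetricSpace X] [MeasurableSpace X] [BorelSpace X]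
    (μ : Measure X) (n : ℕ) (Cgd : ℝ)
    -- geometric doubling: `r`-separated subsets of a ball of radius `R` have
    -- cardinality at most `Cgd * (R/r)^n`
    (hGD : ∀ (x : X) (R r : ℝ) (s : Finset X), 0 < r → r ≤ R →
      (∀ y ∈ s, y ∈ closedBall x R) → (∀ y ∈ s, ∀ z ∈ s, y ≠ z → r ≤ dist y z) →
      (s.card : ℝ) ≤ Cgd * (R / r) ^ n)
    (lam : X → ℝ → ℝ≥0∞) (Cl : ℝ≥0∞) (hCl : 1 ≤ Cl) (hClfin : Cl < ⊤)
    (hpos : ∀ x r, 0 < r → 0 < lam x r ∧ lam x r < ⊤)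
    (hmono : ∀ x r s, 0 < r → r ≤ s → lam x r ≤ lam x s)
    (hdom : ∀ x r, 0 < r → μ (ball x r) ≤ lam x r)
    (hhalf : ∀ x r, 0 < r → lam x r ≤ Cl * lam x (r / 2))
    (hquasi : ∀ x y r, 0 < r → dist x y ≤ r → lam x r ≤ Cl * lam y r) :
    ∃ C : ℝ≥0∞, C < ⊤ ∧ ∀ (f₁ f₂ : X → ℝ), Integrable f₁ μ → Integrable f₂ μ →
      ∀ t : ℝ≥0∞, 0 < t →
        μ {x | t < ⨆ (r : ℝ) (_ : 0 < r),
            (lam x r)⁻¹ * (lam x r)⁻¹ * ((∫⁻ y in ball x r, ‖f₁ y‖₊ ∂μ) *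
              ∫⁻ y in ball x r, ‖f₂ y‖₊ ∂μ)}
          ≤ C * (t⁻¹ * ((∫⁻ y, ‖f₁ y‖₊ ∂μ) * ∫⁻ y, ‖f₂ y‖₊ ∂μ)) ^ (1/2 : ℝ) :=
  stmt1_general μ lam Cl hClfin hpos hdom hhalf
end
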